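/- If S : ℝ → ℝ is differentiable and satisfies S' = -βSI - αS + μ - μS with μ > 0, β ≥ 0, α ≥ 0, I(t) ≥ 0 continuous, and 0 ≤ S(0) ≤ 1 with additionally S+V+I+R ≡ 1 and V, I, R ≥ 0, then 0 ≤ S(t) ≤ 1 for all t ≥ 0. -/

import Mathlib

/-!
The lower bound is a barrier argument: wherever `S` vanishes its derivative equals `μ > 0`, so
`S` can never cross zero from above.
-/

theorem nonneg_of_deriv_pos_at_zeros {f : ℝ → ℝ} {a : ℝ}
    (hf : Differentiable ℝ f) (ha : 0 ≤ f a) (hzero : ∀ x, f x = 0 → 0 < deriv f x)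
    {x : ℝ} (hx : a ≤ x) : 0 ≤ f x :=
  image_le_of_deriv_right_lt_deriv_boundary (f := fun _ => 0) (f' := fun _ => 0)
    continuousOn_const (fun _ _ => hasDerivWithinAt_const _ _ _) ha
    (fun y => (hf y).hasDerivAt) (fun y _ hy => hzero y hy.symm) ⟨hx, le_rfl⟩

theorem svir_S_in_unit_interval_general
    (β α μ : ℝ) (S V I R : ℝ → ℝ)
    (hμ : 0 < μ)
    (hS : Differentiable ℝ S)
    (hInn : ∀ t, 0 ≤ I t)
    (hS' : ∀ t, deriv S t = -β * S t * I t - α * S t + μ - μ * S t)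
    (hS0 : 0 ≤ S 0 ∧ S 0 ≤ 1)
    (hsum : ∀ t, S t + V t + I t + R t = 1)
    (hVnn : ∀ t, 0 ≤ V t) (hRnn : ∀ t, 0 ≤ R t) :
    ∀ t, 0 ≤ t → 0 ≤ S t ∧ S t ≤ 1 := by
  have hinflow : ∀ t, S t = 0 → 0 < deriv S t := fun t ht => by
    rw [hS' t, ht]
    linarith
  intro t ht
  refine ⟨nonneg_of_deriv_pos_at_zeros hS hS0.1 hinflow ht, ?_⟩
  linarith [hsum t, hVnn t, hInn t, hRnn t]

/-- Invariance of [0,1] for the S compartment of the SVIR system. -/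
theorem svir_S_in_unit_interval
    (β α μ : ℝ) (S V I R : ℝ → ℝ)
    (hμ : 0 < μ) (hβ : 0 ≤ β) (hα : 0 ≤ α)
    (hS : Differentiable ℝ S)
    (hIcont : Continuous I)
    (hInn : ∀ t, 0 ≤ I t)
    (hS' : ∀ t, deriv S t = -β * S t * I t - α * S t + μ - μ * S t)
    (hS0 : 0 ≤ S 0 ∧ S 0 ≤ 1)
    (hsum : ∀ t, S t + V t + I t + R t = 1)
    (hVnn : ∀ t, 0 ≤ V t) (hRnn : ∀ t, 0 ≤ R t) :
    ∀ t, 0 ≤ t → 0 ≤ S t ∧ S t ≤ 1 :=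
  svir_S_in_unit_interval_general β α μ S V I R hμ hS hInn hS' hS0 hsum hVnn hRnn
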